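/- arXiv:2511.19628 — 5 statements merged into one kernel-verified Lean document; each statement's English description precedes it below -/
import Mathlib

section
/- f(x) tends to 1 as x tends to 0 from the right within (0, T), and f(x) tends to 1 as x tends to T from the left within (0, T). -/
open Real in
/-- The Gamma-extended binomial-based pseudo-likelihood
`f(x) = Γ(T+1)/(Γ(x+1)·Γ(T−x+1)) · (x/T)^x · ((T−x)/T)^(T−x)`. -/
noncomputable def binPseudoLik (T x : ℝ) : ℝ :=
  Gamma (T + 1) / (Gamma (x + 1) * Gamma (T - x + 1)) *
    (x / T) ^ x * ((T - x) / T) ^ (T - x)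

open Real Filter Topology in
lemma aux_rpow_self_div (T : ℝ) (hT : 0 < T) :
    Filter.Tendsto (fun x : ℝ => (x / T) ^ x) (nhdsWithin 0 (Set.Ioi 0)) (nhds 1) := by
  have h0 : Tendsto (fun x : ℝ => ((x / T) * Real.log (x / T)) * T)
      (nhdsWithin 0 (Set.Ioi 0)) (nhds 0) := by
    have h1 : Tendsto (fun x : ℝ => x / T) (nhds (0 : ℝ)) (nhds 0) := by
      simpa using (continuous_id.div_const T).tendsto 0
    have h2 := (Real.continuous_mul_log.tendsto 0).comp h1
    simp only [Function.comp, Real.log_zero, mul_zero] at h2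
    have := h2.mul_const T
    simpa using this.mono_left nhdsWithin_le_nhds
  have hexp : Tendsto (fun x : ℝ => Real.exp (((x / T) * Real.log (x / T)) * T))
      (nhdsWithin 0 (Set.Ioi 0)) (nhds 1) := by
    simpa [Function.comp_def] using (Real.continuous_exp.tendsto 0).comp h0
  refine hexp.congr' ?_
  filter_upwards [self_mem_nhdsWithin] with x (hx : 0 < x)
  have hxT : 0 < x / T := div_pos hx hT
  rw [Real.rpow_def_of_pos hxT]
  congr 1
  field_simp

open Real Filter Topology in
lemma aux_binPseudoLik_zero (T : ℝ) (hT : 0 < T) :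
    Filter.Tendsto (binPseudoLik T) (nhdsWithin 0 (Set.Ioo 0 T)) (nhds 1) := by
  have hA : Tendsto (fun x : ℝ => Gamma (T + 1) / (Gamma (x + 1) * Gamma (T - x + 1)))
      (nhds 0) (nhds 1) := by
    have hc1 : ContinuousAt Gamma (1 : ℝ) :=
      (Real.differentiableAt_Gamma (fun m => by
        intro hc; have : (0:ℝ) ≤ m := Nat.cast_nonneg m; linarith)).continuousAt
    have hc2 : ContinuousAt Gamma (T + 1 : ℝ) :=
      (Real.differentiableAt_Gamma (fun m => by
        intro hc; have : (0:ℝ) ≤ m := Nat.cast_nonneg m; linarith)).continuousAt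
    have h1 : Tendsto (fun x : ℝ => Gamma (x + 1)) (nhds 0) (nhds (Gamma 1)) := by
      have ht : Tendsto (fun x : ℝ => x + 1) (nhds (0:ℝ)) (nhds 1) := by
        simpa using ((by continuity : Continuous fun x : ℝ => x + 1)).tendsto 0
      exact hc1.tendsto.comp ht
    have h2 : Tendsto (fun x : ℝ => Gamma (T - x + 1)) (nhds 0) (nhds (Gamma (T + 1))) := by
      have hc : Continuous fun x : ℝ => T - x + 1 := by continuity
      have : Tendsto (fun x : ℝ => T - x + 1) (nhds (0:ℝ)) (nhds (T + 1)) := by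
        simpa using hc.tendsto 0
      exact hc2.tendsto.comp this
    have hGpos := Real.Gamma_pos_of_pos (show (0:ℝ) < T + 1 by linarith)
    have hne : Gamma 1 * Gamma (T + 1) ≠ 0 := by
      rw [Real.Gamma_one]; positivity
    have := (tendsto_const_nhds (x := Gamma (T + 1))
      (f := nhds (0:ℝ))).div (h1.mul h2) hne
    have heq : Gamma (T + 1) / (Gamma 1 * Gamma (T + 1)) = 1 := by
      rw [Real.Gamma_one, one_mul, div_self hGpos.ne']
    rwa [heq] at this
  have hB : Tendsto (fun x : ℝ => (x / T) ^ x) (nhdsWithin 0 (Set.Ioo 0 T)) (nhds 1) :=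
    (aux_rpow_self_div T hT).mono_left (nhdsWithin_mono _ (fun x hx => hx.1))
  have hC : Tendsto (fun x : ℝ => ((T - x) / T) ^ (T - x)) (nhds 0) (nhds 1) := by
    have hc : Continuous fun x : ℝ => (T - x) / T := by continuity
    have hbase : Tendsto (fun x : ℝ => (T - x) / T) (nhds (0:ℝ)) (nhds 1) := by
      simpa [div_self hT.ne'] using hc.tendsto 0
    have hc' : Continuous fun x : ℝ => T - x := by continuity
    have hexpo : Tendsto (fun x : ℝ => T - x) (nhds (0:ℝ)) (nhds T) := by
      simpa using hc'.tendsto 0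
    have := hbase.rpow hexpo (Or.inl one_ne_zero)
    simpa using this
  have := ((hA.mono_left nhdsWithin_le_nhds).mul hB).mul (hC.mono_left nhdsWithin_le_nhds)
  simpa using (show Tendsto (binPseudoLik T) _ _ from this)

/-- `f(x) → 1` as `x → 0⁺` within `(0, T)`, and `f(x) → 1` as `x → T⁻`
within `(0, T)`. -/
theorem binPseudoLik_boundary_limits (T : ℝ) (hT : 0 < T) :
    Filter.Tendsto (binPseudoLik T) (nhdsWithin 0 (Set.Ioo 0 T)) (nhds 1) ∧
      Filter.Tendsto (binPseudoLik T) (nhdsWithin T (Set.Ioo 0 T)) (nhds 1) := by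
  refine ⟨aux_binPseudoLik_zero T hT, ?_⟩
  have hmap : Filter.Tendsto (fun x : ℝ => T - x) (nhdsWithin T (Set.Ioo 0 T))
      (nhdsWithin 0 (Set.Ioo 0 T)) := by
    apply Filter.Tendsto.inf
    · have hc : Continuous fun x : ℝ => T - x := by continuity
      simpa using (hc.tendsto T)
    · refine Filter.tendsto_principal.2 ?_
      filter_upwards [Filter.mem_principal_self _] with x hx
      exact ⟨by linarith [hx.2], by linarith [hx.1]⟩
  have h := (aux_binPseudoLik_zero T hT).comp hmap
  refine h.congr fun x => ?_
  simp only [Function.comp, binPseudoLik]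
  rw [show T - (T - x) = x by ring]
  ring
end

section
/- For every x in the open interval (0, T), one has 1/x + 1/(T−x) − ∑_{k=0}^∞ 1/((x+1)+k)² − ∑_{k=0}^∞ 1/((T−x+1)+k)² > 0; that is, the second derivative l''(x) = −ψ¹(x+1) − ψ¹(T−x+1) + 1/x + 1/(T−x) of the log pseudo-likelihood is strictly positive on (0, T). -/
lemma telescope_hasSum (a : ℝ) (ha : 0 < a) :
    HasSum (fun k : ℕ => 1 / (a + k) - 1 / (a + k + 1)) (1 / a) := by
  have key : ∀ n : ℕ, ∑ k ∈ Finset.range n, (1 / (a + k) - 1 / (a + k + 1))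
      = 1 / a - 1 / (a + n) := by
    intro n
    induction n with
    | zero => simp
    | succ n ih =>
      rw [Finset.sum_range_succ, ih]
      push_cast
      ring
  have hnonneg : ∀ k : ℕ, 0 ≤ 1 / (a + k) - 1 / (a + k + 1) := by
    intro k
    have h1 : 0 < a + k := by positivity
    have h2 : 0 < a + k + 1 := by linarith
    rw [sub_nonneg]
    apply one_div_le_one_div_of_le h1; linarith
  rw [hasSum_iff_tendsto_nat_of_nonneg hnonneg]
  simp only [key]
  have : Filter.Tendsto (fun n : ℕ => 1 / (a + n)) Filter.atTop (nhds 0) := by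
    simp only [one_div]
    apply Filter.Tendsto.comp tendsto_inv_atTop_zero
    apply Filter.tendsto_atTop_add_const_left
    exact tendsto_natCast_atTop_atTop
  simpa using (tendsto_const_nhds.sub this)

lemma trigamma_lt (a : ℝ) (ha : 0 < a) :
    (∑' k : ℕ, 1 / ((a + 1) + (k : ℝ)) ^ 2) < 1 / a := by
  set g : ℕ → ℝ := fun k => 1 / (a + k) - 1 / (a + k + 1) with hg
  set f : ℕ → ℝ := fun k => 1 / ((a + 1) + (k : ℝ)) ^ 2 with hf
  have hgs : HasSum g (1 / a) := telescope_hasSum a ha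
  have hle : ∀ k, f k ≤ g k := by
    intro k
    have h1 : 0 < a + k := by positivity
    have h2 : 0 < a + k + 1 := by linarith
    have : g k = 1 / ((a + k) * (a + k + 1)) := by
      simp only [hg]; rw [div_sub_div _ _ h1.ne' h2.ne']; congr 1; ring
    rw [this]
    simp only [hf]
    apply one_div_le_one_div_of_le (by positivity)
    nlinarith
  have hlt0 : f 0 < g 0 := by
    have : g 0 = 1 / (a * (a + 1)) := by
      simp only [hg]; push_cast; field_simp; ring
    rw [this, hf]
    simp only [Nat.cast_zero, add_zero]
    apply one_div_lt_one_div_of_lt (by positivity)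
    nlinarith
  have hfnn : ∀ k, 0 ≤ f k := by intro k; positivity
  have hfs : Summable f := Summable.of_nonneg_of_le hfnn hle hgs.summable
  calc ∑' k, f k < ∑' k, g k := Summable.tsum_lt_tsum hle hlt0 hfs hgs.summable
    _ = 1 / a := hgs.tsum_eq

/-- For every `x ∈ (0, T)`,
`1/x + 1/(T−x) − ∑_{k=0}^∞ 1/((x+1)+k)² − ∑_{k=0}^∞ 1/((T−x+1)+k)² > 0`;
i.e. the second derivative `l''(x) = −ψ¹(x+1) − ψ¹(T−x+1) + 1/x + 1/(T−x)`
of the log pseudo-likelihood is strictly positive on `(0, T)`. -/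
theorem logBinPseudoLik_second_deriv_pos (T : ℝ) (hT : 0 < T) :
    ∀ x ∈ Set.Ioo (0 : ℝ) T,
      0 < 1 / x + 1 / (T - x) - (∑' k : ℕ, 1 / ((x + 1) + (k : ℝ)) ^ 2) -
        (∑' k : ℕ, 1 / ((T - x + 1) + (k : ℝ)) ^ 2) := by
  intro x hx
  obtain ⟨hx0, hxT⟩ := hx
  have h1 := trigamma_lt x hx0
  have h2 := trigamma_lt (T - x) (by linarith)
  linarith
end

section
/- The function l(x) = log Γ(T+1) − log Γ(x+1) − log Γ(T−x+1) + x·log(x/T) + (T−x)·log((T−x)/T) is strictly convex on the open interval (0, T). -/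
open Real Set Filter Topology

/-! ### Auxiliary derivative lemmas -/

private lemma hasDerivAt_shiftLog (a x : ℝ) (h : 0 < x + a) :
    HasDerivAt (fun y : ℝ => Real.log (y + a)) (x + a)⁻¹ x := by
  have := (Real.hasDerivAt_log h.ne').comp x ((hasDerivAt_id x).add_const a)
  simp only [mul_one] at this
  exact this

private lemma hasDerivAt_shiftMulLog (a x : ℝ) (h : 0 < x + a) :
    HasDerivAt (fun y : ℝ => (y + a) * Real.log (y + a)) (Real.log (x + a) + 1) x := by
  have h1 : HasDerivAt (fun y : ℝ => y + a) 1 x := (hasDerivAt_id x).add_const a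
  have := h1.mul (hasDerivAt_shiftLog a x h)
  refine this.congr_deriv ?_
  field_simp [h.ne']

private lemma hasDerivAt_shiftInv (a x : ℝ) (h : 0 < x + a) :
    HasDerivAt (fun y : ℝ => (y + a)⁻¹) (-(((x + a) ^ 2)⁻¹)) x := by
  have h1 : HasDerivAt (fun y : ℝ => y + a) 1 x := (hasDerivAt_id x).add_const a
  have := h1.inv h.ne'
  refine this.congr_deriv ?_
  field_simp [h.ne']

/-! ### Convexity building blocks -/

private lemma convexOn_shiftMulLog (a : ℝ) (ha : 0 ≤ a) :
    ConvexOn ℝ (Ioi 0) (fun y : ℝ => (y + a) * Real.log (y + a)) := by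
  have hpos : ∀ x ∈ interior (Ioi (0:ℝ)), 0 < x + a := by
    rw [interior_Ioi]; intro x hx; have : (0:ℝ) < x := hx; linarith
  refine convexOn_of_hasDerivWithinAt2_nonneg (f' := fun y => Real.log (y + a) + 1)
    (f'' := fun y => (y + a)⁻¹) (convex_Ioi 0) ?_ ?_ ?_ ?_
  · intro x hx
    have : (0:ℝ) < x + a := by have : (0:ℝ) < x := hx; linarith
    exact (hasDerivAt_shiftMulLog a x this).continuousAt.continuousWithinAt
  · intro x hx
    exact (hasDerivAt_shiftMulLog a x (hpos x hx)).hasDerivWithinAt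
  · intro x hx
    exact (((hasDerivAt_shiftLog a x (hpos x hx)).add_const 1)).hasDerivWithinAt
  · intro x hx
    exact (inv_pos.2 (hpos x hx)).le

private lemma convexOn_cBlock (a : ℝ) (ha : 0 < a) :
    ConvexOn ℝ (Ioi 0) (fun y : ℝ =>
      (y + a) * Real.log (y + a) - (y + (a + 1)) * Real.log (y + (a + 1))
        + Real.log (y + (a + 2⁻¹))) := by
  have hpos : ∀ x ∈ interior (Ioi (0:ℝ)), 0 < x + a := by
    rw [interior_Ioi]; intro x hx; have : (0:ℝ) < x := hx; linarith
  refine convexOn_of_hasDerivWithinAt2_nonneg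
    (f' := fun y => (Real.log (y + a) + 1) - (Real.log (y + (a + 1)) + 1) + (y + (a + 2⁻¹))⁻¹)
    (f'' := fun y => ((y + a)⁻¹ - (y + (a + 1))⁻¹) + -(((y + (a + 2⁻¹)) ^ 2)⁻¹))
    (convex_Ioi 0) ?_ ?_ ?_ ?_
  · intro x hx
    have h0 : (0:ℝ) < x := hx
    exact (((hasDerivAt_shiftMulLog a x (by linarith)).sub
      (hasDerivAt_shiftMulLog (a+1) x (by linarith))).add
      (hasDerivAt_shiftLog (a+2⁻¹) x (by linarith))).continuousAt.continuousWithinAt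
  · intro x hx
    have h0 : 0 < x + a := hpos x hx
    exact (((hasDerivAt_shiftMulLog a x h0).sub
      (hasDerivAt_shiftMulLog (a+1) x (by linarith))).add
      (hasDerivAt_shiftLog (a+2⁻¹) x (by linarith))).hasDerivWithinAt
  · intro x hx
    have h0 : 0 < x + a := hpos x hx
    exact ((((hasDerivAt_shiftLog a x h0).add_const 1).sub
      ((hasDerivAt_shiftLog (a+1) x (by linarith)).add_const 1)).add
      (hasDerivAt_shiftInv (a+2⁻¹) x (by linarith))).hasDerivWithinAt
  · intro x hx
    have h0 : 0 < x + a := hpos x hx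
    have h1 : (0:ℝ) < x + (a + 1) := by linarith
    have h2 : (0:ℝ) < x + (a + 2⁻¹) := by linarith
    have e1 : x + (a + 1) = (x + a) + 1 := by ring
    have e2 : x + (a + 2⁻¹) = (x + a) + 2⁻¹ := by ring
    rw [e1, e2]
    have key : ((x + a)⁻¹ - ((x + a) + 1)⁻¹) + -((((x + a) + 2⁻¹) ^ 2)⁻¹)
        = 4⁻¹ / ((x + a) * ((x + a) + 1) * ((x + a) + 2⁻¹) ^ 2) := by
      rw [eq_div_iff (by positivity)]
      field_simp
      ring
    rw [key]
    positivity

/-- The "strict part minus quadratic" block, convex on `Ioo 0 T`. -/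
private lemma convexOn_sPart (T : ℝ) (hT : 0 < T) :
    ConvexOn ℝ (Ioo 0 T) (fun y : ℝ =>
      y * Real.log y - (y + 2⁻¹) * Real.log (y + 2⁻¹)
        - (4 * T * (T + 2⁻¹))⁻¹ * y ^ 2) := by
  have hint : interior (Ioo (0:ℝ) T) = Ioo 0 T := interior_Ioo
  have hmain : ∀ x : ℝ, 0 < x →
      HasDerivAt (fun y : ℝ =>
          y * Real.log y - (y + 2⁻¹) * Real.log (y + 2⁻¹) - (4 * T * (T + 2⁻¹))⁻¹ * y ^ 2)
        ((Real.log x + 1) - (Real.log (x + 2⁻¹) + 1) - (4 * T * (T + 2⁻¹))⁻¹ * (2 * x)) x := by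
    intro x h0
    have ha : HasDerivAt (fun y : ℝ => y * Real.log y) (Real.log x + 1) x := by
      simpa using hasDerivAt_shiftMulLog 0 x (by linarith)
    have hb : HasDerivAt (fun y : ℝ => (y + 2⁻¹) * Real.log (y + 2⁻¹))
        (Real.log (x + 2⁻¹) + 1) x := hasDerivAt_shiftMulLog 2⁻¹ x (by linarith)
    have hq : HasDerivAt (fun y : ℝ => (4 * T * (T + 2⁻¹))⁻¹ * y ^ 2)
        ((4 * T * (T + 2⁻¹))⁻¹ * (2 * x)) x := by
      have := (hasDerivAt_pow 2 x).const_mul ((4 * T * (T + 2⁻¹))⁻¹)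
      refine this.congr_deriv ?_
      push_cast
      norm_num
    exact (ha.sub hb).sub hq
  have hmain' : ∀ x : ℝ, 0 < x →
      HasDerivAt (fun y : ℝ =>
          (Real.log y + 1) - (Real.log (y + 2⁻¹) + 1) - (4 * T * (T + 2⁻¹))⁻¹ * (2 * y))
        ((x⁻¹ - (x + 2⁻¹)⁻¹) - (4 * T * (T + 2⁻¹))⁻¹ * 2) x := by
    intro x h0
    have ha : HasDerivAt (fun y : ℝ => Real.log y + 1) x⁻¹ x :=
      (Real.hasDerivAt_log h0.ne').add_const 1
    have hb : HasDerivAt (fun y : ℝ => Real.log (y + 2⁻¹) + 1) (x + 2⁻¹)⁻¹ x :=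
      (hasDerivAt_shiftLog 2⁻¹ x (by linarith)).add_const 1
    have hq : HasDerivAt (fun y : ℝ => (4 * T * (T + 2⁻¹))⁻¹ * (2 * y))
        ((4 * T * (T + 2⁻¹))⁻¹ * 2) x := by
      have := ((hasDerivAt_id x).const_mul (2:ℝ)).const_mul ((4 * T * (T + 2⁻¹))⁻¹)
      simpa using this
    exact (ha.sub hb).sub hq
  refine convexOn_of_hasDerivWithinAt2_nonneg
    (f' := fun y => (Real.log y + 1) - (Real.log (y + 2⁻¹) + 1)
        - (4 * T * (T + 2⁻¹))⁻¹ * (2 * y))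
    (f'' := fun y => (y⁻¹ - (y + 2⁻¹)⁻¹) - (4 * T * (T + 2⁻¹))⁻¹ * 2)
    (convex_Ioo 0 T) ?_ ?_ ?_ ?_
  · intro x hx
    exact (hmain x hx.1).continuousAt.continuousWithinAt
  · intro x hx
    rw [hint] at hx
    exact (hmain x hx.1).hasDerivWithinAt
  · intro x hx
    rw [hint] at hx
    exact (hmain' x hx.1).hasDerivWithinAt
  · intro x hx
    rw [hint] at hx
    obtain ⟨h0, hxT⟩ := hx
    have e1 : x⁻¹ - (x + 2⁻¹)⁻¹ = 2⁻¹ / (x * (x + 2⁻¹)) := by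
      rw [eq_div_iff (by positivity)]
      field_simp
      ring
    have e2 : (4 * T * (T + 2⁻¹))⁻¹ * 2 = 2⁻¹ / (T * (T + 2⁻¹)) := by
      rw [eq_div_iff (by positivity)]
      field_simp
      ring
    rw [e1, e2, sub_nonneg]
    gcongr

private lemma strictConvexOn_quad {ε : ℝ} (hε : 0 < ε) {S : Set ℝ} (hS : Convex ℝ S) :
    StrictConvexOn ℝ S (fun y : ℝ => ε * y ^ 2) := by
  refine ⟨hS, fun x hx y hy hxy a b ha hb hab => ?_⟩
  simp only [smul_eq_mul]
  have h1 : 0 < (x - y) ^ 2 := by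
    have : x - y ≠ 0 := sub_ne_zero.2 hxy
    positivity
  have key : a * (ε * x ^ 2) + b * (ε * y ^ 2) - ε * (a * x + b * y) ^ 2
      = ε * (a * b * (x - y) ^ 2) := by
    have hb' : b = 1 - a := by linarith
    subst hb'
    ring
  have h2 : 0 < ε * (a * b * (x - y) ^ 2) := by
    have := mul_pos (mul_pos ha hb) h1
    exact mul_pos hε this
  linarith [key, h2]

private lemma convexOn_affine (a b : ℝ) {S : Set ℝ} (hS : Convex ℝ S) :
    ConvexOn ℝ S (fun y : ℝ => a * y + b) := by
  refine ⟨hS, fun x hx y hy p q hp hq hpq => ?_⟩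
  simp only [smul_eq_mul]
  have : q = 1 - p := by linarith
  subst this
  exact le_of_eq (by ring)

private lemma convexOn_sum_range {S : Set ℝ} (hS : Convex ℝ S) (f : ℕ → ℝ → ℝ) (n : ℕ)
    (h : ∀ j, ConvexOn ℝ S (f j)) :
    ConvexOn ℝ S (fun y : ℝ => ∑ j ∈ Finset.range n, f j y) := by
  induction n with
  | zero => simpa using convexOn_const 0 hS
  | succ m ih =>
      have := ih.add (h m)
      simp only [Finset.sum_range_succ]
      exact this

private lemma convexOn_congr {S : Set ℝ} {f g : ℝ → ℝ} (h : ConvexOn ℝ S f)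
    (he : ∀ x ∈ S, f x = g x) : ConvexOn ℝ S g := by
  refine ⟨h.1, fun x hx y hy a b ha hb hab => ?_⟩
  rw [← he x hx, ← he y hy, ← he _ (h.1 hx hy ha hb hab)]
  exact h.2 hx hy ha hb hab

private lemma strictConvexOn_congr {S : Set ℝ} {f g : ℝ → ℝ} (h : StrictConvexOn ℝ S f)
    (he : ∀ x ∈ S, f x = g x) : StrictConvexOn ℝ S g := by
  refine ⟨h.1, fun x hx y hy hxy a b ha hb hab => ?_⟩
  rw [← he x hx, ← he y hy, ← he _ (h.1 hx hy ha.le hb.le hab)]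
  exact h.2 hx hy hxy ha hb hab

private lemma convexOn_limit {S : Set ℝ} (hS : Convex ℝ S) {F : ℕ → ℝ → ℝ} {g : ℝ → ℝ}
    (hF : ∀ n, ConvexOn ℝ S (F n))
    (hlim : ∀ y ∈ S, Tendsto (fun n => F n y) atTop (𝓝 (g y))) : ConvexOn ℝ S g := by
  refine ⟨hS, fun x hx y hy a b ha hb hab => ?_⟩
  have h1 : Tendsto (fun n => F n (a • x + b • y)) atTop (𝓝 (g (a • x + b • y))) :=
    hlim _ (hS hx hy ha hb hab)
  have h2 : Tendsto (fun n => a • F n x + b • F n y) atTop (𝓝 (a • g x + b • g y)) := by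
    simp only [smul_eq_mul]
    exact ((hlim x hx).const_mul a).add ((hlim y hy).const_mul b)
  exact le_of_tendsto_of_tendsto' h1 h2 fun n => (hF n).2 hx hy ha hb hab

/-! ### Telescoping identity -/

private lemma teleSum (y : ℝ) (n : ℕ) :
    ∑ j ∈ Finset.range (n + 1),
      ((y + ((j : ℝ) + 2⁻¹)) * Real.log (y + ((j : ℝ) + 2⁻¹))
        - (y + ((j : ℝ) + 2⁻¹ + 1)) * Real.log (y + ((j : ℝ) + 2⁻¹ + 1))
        + Real.log (y + ((j : ℝ) + 2⁻¹ + 2⁻¹)))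
    = (y + 2⁻¹) * Real.log (y + 2⁻¹)
      - (y + ((n : ℝ) + 1 + 2⁻¹)) * Real.log (y + ((n : ℝ) + 1 + 2⁻¹))
      + ∑ j ∈ Finset.range (n + 1), Real.log (y + 1 + (j : ℝ)) := by
  set f : ℕ → ℝ := fun k => (y + ((k : ℝ) + 2⁻¹)) * Real.log (y + ((k : ℝ) + 2⁻¹)) with hf
  have h1 : ∀ j ∈ Finset.range (n + 1),
      (y + ((j : ℝ) + 2⁻¹)) * Real.log (y + ((j : ℝ) + 2⁻¹))
        - (y + ((j : ℝ) + 2⁻¹ + 1)) * Real.log (y + ((j : ℝ) + 2⁻¹ + 1))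
        + Real.log (y + ((j : ℝ) + 2⁻¹ + 2⁻¹))
      = (f j - f (j + 1)) + Real.log (y + 1 + (j : ℝ)) := by
    intro j _
    have hc : ((j + 1 : ℕ) : ℝ) = (j : ℝ) + 1 := by push_cast; ring
    rw [hf]
    simp only [hc]
    have e1 : y + ((j : ℝ) + 1 + 2⁻¹) = y + ((j : ℝ) + 2⁻¹ + 1) := by ring
    have e2 : y + ((j : ℝ) + 2⁻¹ + 2⁻¹) = y + 1 + (j : ℝ) := by ring
    rw [e1, e2]
  rw [Finset.sum_congr rfl h1, Finset.sum_add_distrib, Finset.sum_range_sub' f (n + 1)]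
  have hc : ((n + 1 : ℕ) : ℝ) = (n : ℝ) + 1 := by push_cast; ring
  rw [hf]
  simp only [hc, Nat.cast_zero]
  have e0 : y + ((0 : ℝ) + 2⁻¹) = y + 2⁻¹ := by ring
  have e1 : y + ((n : ℝ) + 1 + 2⁻¹) = y + ((n : ℝ) + 1 + 2⁻¹) := rfl
  rw [e0]

/-! ### Euler limit formula, logarithmic form -/

private lemma log_gammaSeq (y : ℝ) (hy : 0 < y) (n : ℕ) (hn : 1 ≤ n) :
    Real.log (Real.GammaSeq (y + 1) n)
      = (y + 1) * Real.log n + Real.log (Nat.factorial n)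
        - ∑ j ∈ Finset.range (n + 1), Real.log (y + 1 + (j : ℝ)) := by
  have hn0 : (0:ℝ) < (n : ℝ) := by exact_mod_cast hn
  have hfac : (0:ℝ) < ((Nat.factorial n : ℕ) : ℝ) := by exact_mod_cast Nat.factorial_pos n
  have hP : (0:ℝ) < ∏ j ∈ Finset.range (n + 1), (y + 1 + (j : ℝ)) :=
    Finset.prod_pos fun j _ => by positivity
  have hpow : (0:ℝ) < (n : ℝ) ^ (y + 1) := Real.rpow_pos_of_pos hn0 _
  unfold Real.GammaSeq
  rw [Real.log_div (by positivity) hP.ne', Real.log_mul hpow.ne' hfac.ne',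
    Real.log_rpow hn0, Real.log_prod (fun j _ => by positivity)]

/-! ### Strict convexity of `y ↦ y log y - log Γ(y+1)` on `(0,T)` -/

private lemma strictConvexOn_gl (T : ℝ) (hT : 0 < T) :
    StrictConvexOn ℝ (Ioo 0 T)
      (fun y : ℝ => y * Real.log y - Real.log (Real.Gamma (y + 1))) := by
  have hεpos : (0:ℝ) < (4 * T * (T + 2⁻¹))⁻¹ := by positivity
  set F : ℕ → ℝ → ℝ := fun n y =>
      y * Real.log y - ((y + 1) * Real.log n + Real.log (Nat.factorial n)
        - ∑ j ∈ Finset.range (n + 1), Real.log (y + 1 + (j : ℝ)))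
        - (4 * T * (T + 2⁻¹))⁻¹ * y ^ 2 with hF
  have hFconv : ∀ n, ConvexOn ℝ (Ioo 0 T) (F n) := by
    intro n
    have hdecomp : ∀ y : ℝ, F n y =
        (y * Real.log y - (y + 2⁻¹) * Real.log (y + 2⁻¹)
            - (4 * T * (T + 2⁻¹))⁻¹ * y ^ 2)
        + (∑ j ∈ Finset.range (n + 1),
            ((y + ((j : ℝ) + 2⁻¹)) * Real.log (y + ((j : ℝ) + 2⁻¹))
              - (y + ((j : ℝ) + 2⁻¹ + 1)) * Real.log (y + ((j : ℝ) + 2⁻¹ + 1))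
              + Real.log (y + ((j : ℝ) + 2⁻¹ + 2⁻¹))))
        + (y + ((n : ℝ) + 1 + 2⁻¹)) * Real.log (y + ((n : ℝ) + 1 + 2⁻¹))
        + ((-Real.log n) * y + (-Real.log n - Real.log (Nat.factorial n))) := by
      intro y
      rw [hF]
      dsimp only
      rw [teleSum y n]
      ring
    have c1 := convexOn_sPart T hT
    have c2 : ConvexOn ℝ (Ioo 0 T) (fun y : ℝ => ∑ j ∈ Finset.range (n + 1),
        ((y + ((j : ℝ) + 2⁻¹)) * Real.log (y + ((j : ℝ) + 2⁻¹))
          - (y + ((j : ℝ) + 2⁻¹ + 1)) * Real.log (y + ((j : ℝ) + 2⁻¹ + 1))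
          + Real.log (y + ((j : ℝ) + 2⁻¹ + 2⁻¹)))) := by
      refine convexOn_sum_range (convex_Ioo 0 T) _ (n + 1) fun j => ?_
      exact (convexOn_cBlock ((j : ℝ) + 2⁻¹) (by positivity)).subset
        Ioo_subset_Ioi_self (convex_Ioo 0 T)
    have c3 := (convexOn_shiftMulLog ((n : ℝ) + 1 + 2⁻¹) (by positivity)).subset
        Ioo_subset_Ioi_self (convex_Ioo 0 T)
    have c4 := convexOn_affine (-Real.log n) (-Real.log n - Real.log (Nat.factorial n)) (convex_Ioo 0 T)
    have hadd := ((c1.add c2).add c3).add c4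
    exact convexOn_congr hadd fun y _ => by
      simp only [Pi.add_apply]
      exact (hdecomp y).symm
  have hlim : ∀ y ∈ Ioo 0 T, Tendsto (fun n => F n y) atTop
      (𝓝 (y * Real.log y - Real.log (Real.Gamma (y + 1))
            - (4 * T * (T + 2⁻¹))⁻¹ * y ^ 2)) := by
    intro y hy
    have hy0 : 0 < y := hy.1
    have hΓ : 0 < Real.Gamma (y + 1) := Real.Gamma_pos_of_pos (by linarith)
    have h1 : Tendsto (fun n => Real.log (Real.GammaSeq (y + 1) n)) atTop
        (𝓝 (Real.log (Real.Gamma (y + 1)))) :=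
      ((Real.continuousAt_log hΓ.ne').tendsto).comp (Real.GammaSeq_tendsto_Gamma (y + 1))
    have h2 : Tendsto (fun n => y * Real.log y - Real.log (Real.GammaSeq (y + 1) n)
        - (4 * T * (T + 2⁻¹))⁻¹ * y ^ 2) atTop
        (𝓝 (y * Real.log y - Real.log (Real.Gamma (y + 1))
            - (4 * T * (T + 2⁻¹))⁻¹ * y ^ 2)) :=
      (tendsto_const_nhds.sub h1).sub tendsto_const_nhds
    refine h2.congr' ?_
    filter_upwards [eventually_ge_atTop 1] with n hn
    rw [hF]
    dsimp only
    rw [log_gammaSeq y hy0 n hn]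
  have hconv : ConvexOn ℝ (Ioo 0 T) (fun y : ℝ => y * Real.log y
      - Real.log (Real.Gamma (y + 1)) - (4 * T * (T + 2⁻¹))⁻¹ * y ^ 2) :=
    convexOn_limit (convex_Ioo 0 T) hFconv hlim
  have hstrict := hconv.add_strictConvexOn (strictConvexOn_quad hεpos (convex_Ioo 0 T))
  exact strictConvexOn_congr hstrict fun y _ => by
    simp only [Pi.add_apply]
    ring

open Real in
/-- The logarithm of the Gamma-extended binomial-based pseudo-likelihood:
`l(x) = log Γ(T+1) − log Γ(x+1) − log Γ(T−x+1) + x·log(x/T) + (T−x)·log((T−x)/T)`. -/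
noncomputable def logBinPseudoLik (T x : ℝ) : ℝ :=
  log (Gamma (T + 1)) - log (Gamma (x + 1)) - log (Gamma (T - x + 1)) +
    x * log (x / T) + (T - x) * log ((T - x) / T)

/-- `l` is strictly convex on the open interval `(0, T)`. -/
theorem logBinPseudoLik_strictConvexOn (T : ℝ) (hT : 0 < T) :
    StrictConvexOn ℝ (Set.Ioo 0 T) (logBinPseudoLik T) := by
  have hg := strictConvexOn_gl T hT
  have hrefl : StrictConvexOn ℝ (Ioo 0 T)
      (fun x : ℝ => (T - x) * Real.log (T - x) - Real.log (Real.Gamma (T - x + 1))) := by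
    refine ⟨convex_Ioo 0 T, fun x hx y hy hxy a b ha hb hab => ?_⟩
    have hx' : T - x ∈ Ioo 0 T := ⟨by linarith [hx.2], by linarith [hx.1]⟩
    have hy' : T - y ∈ Ioo 0 T := ⟨by linarith [hy.2], by linarith [hy.1]⟩
    have hne : T - x ≠ T - y := by
      intro h
      exact hxy (by linarith)
    have key := hg.2 hx' hy' hne ha hb hab
    have e : a • (T - x) + b • (T - y) = T - (a • x + b • y) := by
      simp only [smul_eq_mul]
      linear_combination T * hab
    rw [e] at key
    simpa using key
  have hsum := hg.add hrefl
  have hconst : ConvexOn ℝ (Ioo 0 T)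
      (fun _ : ℝ => Real.log (Real.Gamma (T + 1)) - T * Real.log T) :=
    convexOn_const _ (convex_Ioo 0 T)
  have htot := hconst.add_strictConvexOn hsum
  refine strictConvexOn_congr htot ?_
  intro x hx
  obtain ⟨h0, hxT⟩ := hx
  simp only [Pi.add_apply]
  unfold logBinPseudoLik
  rw [Real.log_div h0.ne' hT.ne', Real.log_div (by linarith : T - x ≠ 0) hT.ne']
  ring
end

section
/- For every x in the open interval (0, T) with x ≠ T/2, one has f(T/2) < f(x); that is, the Gamma-extended binomial-based pseudo-likelihood attains a sole (strict global) minimum on (0, T) at x = T/2. -/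
open Real Filter Set

/-- auxiliary strictly convex function -/
noncomputable def philik (s : ℝ) : ℝ := s * Real.log s - s * Real.log (s + 1)

lemma philik_hasDerivAt {s : ℝ} (hs : 0 < s) :
    HasDerivAt philik (Real.log s - Real.log (s + 1) + (s + 1)⁻¹) s := by
  have h1 : (0:ℝ) < s + 1 := by linarith
  have hlog : HasDerivAt (fun t : ℝ => Real.log (t + 1)) (1 / (s + 1)) s := by
    simpa using ((hasDerivAt_id s).add_const 1).log h1.ne'
  have h2 : HasDerivAt (fun t : ℝ => t * Real.log (t + 1))
      (1 * Real.log (s + 1) + s * (1 / (s + 1))) s := (hasDerivAt_id s).mul hlog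
  have h3 : HasDerivAt philik _ s := (Real.hasDerivAt_mul_log hs.ne').sub h2
  convert h3 using 1
  field_simp
  ring

lemma philik_deriv_strictMono :
    StrictMonoOn (fun s : ℝ => Real.log s - Real.log (s + 1) + (s + 1)⁻¹) (Set.Ioi 0) := by
  have hder : ∀ x : ℝ, 0 < x → HasDerivAt
      (fun s : ℝ => Real.log s - Real.log (s + 1) + (s + 1)⁻¹)
      (x⁻¹ - 1 / (x + 1) + (-1 / (x + 1) ^ 2)) x := by
    intro x hx
    have h1 : (0:ℝ) < x + 1 := by linarith
    have hlog : HasDerivAt (fun t : ℝ => Real.log (t + 1)) (1 / (x + 1)) x := by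
      simpa using ((hasDerivAt_id x).add_const 1).log h1.ne'
    have hinv : HasDerivAt (fun t : ℝ => (t + 1)⁻¹) (-1 / (x + 1) ^ 2) x := by
      have := ((hasDerivAt_id x).add_const 1).inv h1.ne'
      simp at this
      exact this
    exact ((Real.hasDerivAt_log hx.ne').sub hlog).add hinv
  apply strictMonoOn_of_deriv_pos (convex_Ioi 0)
  · intro x hx
    exact (hder x hx).continuousAt.continuousWithinAt
  · intro x hx
    rw [interior_Ioi] at hx
    have hx' : (0:ℝ) < x := hx
    rw [(hder x hx').deriv]
    have h1 : (0:ℝ) < x + 1 := by linarith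
    have : x⁻¹ - 1 / (x + 1) + (-1 / (x + 1) ^ 2) = 1 / (x * (x + 1) ^ 2) := by
      have h2 : (x + 1) ^ 2 ≠ 0 := by positivity
      field_simp
      ring
    rw [this]
    positivity

lemma philik_strictConvexOn : StrictConvexOn ℝ (Set.Ioi 0) philik := by
  apply StrictMonoOn.strictConvexOn_of_deriv (convex_Ioi 0)
  · intro x hx
    exact (philik_hasDerivAt hx).continuousAt.continuousWithinAt
  · rw [interior_Ioi]
    intro x hx y hy hxy
    rw [(philik_hasDerivAt hx).deriv, (philik_hasDerivAt hy).deriv]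
    exact philik_deriv_strictMono hx hy hxy

lemma philik_gap {a b : ℝ} (ha : 0 < a) (hab : a < b) :
    2 * philik ((a + b) / 2) < philik a + philik b := by
  have hb : 0 < b := ha.trans hab
  have h := philik_strictConvexOn.2 (Set.mem_Ioi.2 ha) (Set.mem_Ioi.2 hb) hab.ne
    (by norm_num : (0:ℝ) < 1/2) (by norm_num : (0:ℝ) < 1/2) (by norm_num)
  simp only [smul_eq_mul] at h
  have : (1/2 : ℝ) * a + (1/2 : ℝ) * b = (a + b) / 2 := by ring
  rw [this] at h
  linarith

/-- `G(t) = t log t - log Γ(t+1)` -/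
noncomputable def Glog (t : ℝ) : ℝ := t * Real.log t - Real.log (Real.Gamma (t + 1))

lemma Glog_strict_mid {a b : ℝ} (ha : 0 < a) (hab : a < b) :
    2 * Glog ((a + b) / 2) < Glog a + Glog b := by
  have hb : 0 < b := ha.trans hab
  set m : ℝ := (a + b) / 2 with hm
  have hm0 : 0 < m := by rw [hm]; linarith
  -- the energy function
  set E : ℝ → ℝ := fun t => t * Real.log t with hE
  -- the gap sequence from logGammaSeq
  set Q : ℕ → ℝ := fun n => Real.BohrMollerup.logGammaSeq (a + 1) n
      + Real.BohrMollerup.logGammaSeq (b + 1) n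
      - 2 * Real.BohrMollerup.logGammaSeq (m + 1) n with hQ
  have hQlim : Filter.Tendsto Q Filter.atTop
      (nhds (Real.log (Real.Gamma (a + 1)) + Real.log (Real.Gamma (b + 1))
        - 2 * Real.log (Real.Gamma (m + 1)))) := by
    exact ((Real.BohrMollerup.tendsto_log_gamma (by linarith)).add
      (Real.BohrMollerup.tendsto_log_gamma (by linarith))).sub
      ((Real.BohrMollerup.tendsto_log_gamma (by linarith)).const_mul 2)
  -- expansion of Q as a sum
  have hQn : ∀ n : ℕ, Q n = -∑ j ∈ Finset.range (n + 1),
      (Real.log (a + ↑j + 1) + Real.log (b + ↑j + 1) - 2 * Real.log (m + ↑j + 1)) := by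
    intro n
    have expand : ∀ x : ℝ, Real.BohrMollerup.logGammaSeq (x + 1) n
        = (x + 1) * Real.log n + Real.log (Nat.factorial n)
          - ∑ j ∈ Finset.range (n + 1), Real.log (x + ↑j + 1) := by
      intro x
      rw [Real.BohrMollerup.logGammaSeq]
      congr 1
      apply Finset.sum_congr rfl
      intro j _
      ring_nf
    rw [hQ]
    simp only [expand]
    rw [Finset.sum_sub_distrib, Finset.sum_add_distrib, ← Finset.mul_sum, hm]
    ring
  -- telescoping identity
  have tele : ∀ t : ℝ, ∀ N : ℕ, ∑ k ∈ Finset.range N, philik (t + ↑k)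
      = E t - E (t + ↑N) + ∑ k ∈ Finset.range N, Real.log (t + ↑k + 1) := by
    intro t N
    have h1 : ∀ k ∈ Finset.range N, philik (t + ↑k)
        = ((fun k : ℕ => E (t + ↑k)) k - (fun k : ℕ => E (t + ↑k)) (k + 1))
          + Real.log (t + ↑k + 1) := by
      intro k _
      simp only [philik, hE]
      push_cast
      ring
    rw [Finset.sum_congr rfl h1, Finset.sum_add_distrib, Finset.sum_range_sub']
    simp
  -- positivity of the convexity gaps
  have dpos : ∀ k : ℕ, 2 * philik (m + ↑k) < philik (a + ↑k) + philik (b + ↑k) := by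
    intro k
    have hk : (0:ℝ) ≤ (k : ℝ) := Nat.cast_nonneg k
    have h := philik_gap (a := a + ↑k) (b := b + ↑k) (by linarith) (by linarith)
    have : (a + ↑k + (b + ↑k)) / 2 = m + ↑k := by rw [hm]; ring
    rwa [this] at h
  -- the key bound
  set d0 : ℝ := philik a + philik b - 2 * philik m with hd0
  have hd0pos : 0 < d0 := by
    have := dpos 0
    simp only [Nat.cast_zero, add_zero] at this
    rw [hd0]; linarith
  set R : ℕ → ℝ := fun N => E (a + ↑N) + E (b + ↑N) - 2 * E (m + ↑N) with hR
  have key : ∀ n : ℕ, Q n ≤ (E a + E b - 2 * E m) - d0 - R (n + 1) := by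
    intro n
    have ta := tele a (n + 1)
    have tb := tele b (n + 1)
    have tm := tele m (n + 1)
    -- sum of gaps
    have hsum : ∑ k ∈ Finset.range (n + 1),
        (philik (a + ↑k) + philik (b + ↑k) - 2 * philik (m + ↑k))
        = (E a + E b - 2 * E m) - R (n + 1) - Q n := by
      rw [Finset.sum_sub_distrib, Finset.sum_add_distrib, ← Finset.mul_sum, ta, tb, tm,
        hQn n, hR]
      rw [Finset.sum_sub_distrib, Finset.sum_add_distrib, ← Finset.mul_sum]
      ring
    have hge : d0 ≤ ∑ k ∈ Finset.range (n + 1),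
        (philik (a + ↑k) + philik (b + ↑k) - 2 * philik (m + ↑k)) := by
      have h0 : d0 = philik (a + ↑(0:ℕ)) + philik (b + ↑(0:ℕ)) - 2 * philik (m + ↑(0:ℕ)) := by
        simp [hd0]
      rw [h0]
      apply Finset.single_le_sum (f := fun k : ℕ =>
        philik (a + ↑k) + philik (b + ↑k) - 2 * philik (m + ↑k))
        (fun k _ => by have := dpos k; linarith)
      simp
    linarith [hsum ▸ hge]
  -- limit of R
  have hRlim : Filter.Tendsto (fun n : ℕ => R (n + 1)) Filter.atTop (nhds 0) := by
    have hlim : ∀ c : ℝ, Filter.Tendsto (fun u : ℝ => (u + c) * Real.log (1 + c / u))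
        Filter.atTop (nhds c) := by
      intro c
      have h1 := Real.tendsto_mul_log_one_add_div_atTop c
      have hq : Filter.Tendsto (fun u : ℝ => 1 + c / u) Filter.atTop (nhds 1) := by
        have hdiv : Filter.Tendsto (fun u : ℝ => c / u) Filter.atTop (nhds 0) :=
          Filter.Tendsto.div_atTop tendsto_const_nhds Filter.tendsto_id
        simpa using Filter.Tendsto.const_add (1:ℝ) hdiv
      have h2 : Filter.Tendsto (fun u : ℝ => Real.log (1 + c / u)) Filter.atTop (nhds 0) := by
        have := (Real.continuousAt_log one_ne_zero).tendsto.comp hq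
        simp at this
        exact this
      have h3 := h1.add (h2.const_mul c)
      have h4 : Filter.Tendsto (fun u : ℝ => u * Real.log (1 + c / u)
          + c * Real.log (1 + c / u)) Filter.atTop (nhds c) := by simpa using h3
      apply h4.congr
      intro u
      ring
    set α : ℝ := a - m with hα
    set β : ℝ := b - m with hβ
    have hαβ : α + β = 0 := by rw [hα, hβ, hm]; ring
    have hF : Filter.Tendsto (fun u : ℝ => (u + α) * Real.log (1 + α / u)
        + (u + β) * Real.log (1 + β / u)) Filter.atTop (nhds 0) := by
      have := (hlim α).add (hlim β)
      rwa [hαβ] at this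
    have hcomp : Filter.Tendsto (fun s : ℝ => (m + s + α) * Real.log (1 + α / (m + s))
        + (m + s + β) * Real.log (1 + β / (m + s))) Filter.atTop (nhds 0) :=
      hF.comp (Filter.tendsto_atTop_add_const_left _ m Filter.tendsto_id)
    have heq : ∀ᶠ s : ℝ in Filter.atTop,
        (m + s + α) * Real.log (1 + α / (m + s)) + (m + s + β) * Real.log (1 + β / (m + s))
        = E (a + s) + E (b + s) - 2 * E (m + s) := by
      filter_upwards [Filter.eventually_gt_atTop (0:ℝ)] with s hs
      have hms : 0 < m + s := by linarith
      have has : 0 < a + s := by linarith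
      have hbs : 0 < b + s := by linarith
      have e1 : 1 + α / (m + s) = (a + s) / (m + s) := by
        rw [hα]; field_simp; ring
      have e2 : 1 + β / (m + s) = (b + s) / (m + s) := by
        rw [hβ]; field_simp; ring
      rw [e1, e2, Real.log_div has.ne' hms.ne', Real.log_div hbs.ne' hms.ne']
      have hma : m + s + α = a + s := by rw [hα]; ring
      have hmb : m + s + β = b + s := by rw [hβ]; ring
      rw [hma, hmb]
      simp only [hE]
      have h2m : a + s + (b + s) = 2 * (m + s) := by rw [hm]; ring
      linear_combination (-Real.log (m + s)) * h2m
    have hreal : Filter.Tendsto (fun s : ℝ => E (a + s) + E (b + s) - 2 * E (m + s))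
        Filter.atTop (nhds 0) := hcomp.congr' heq
    have hnat : Filter.Tendsto (fun n : ℕ => ((n : ℝ) + 1)) Filter.atTop Filter.atTop :=
      Filter.tendsto_atTop_add_const_right _ 1 tendsto_natCast_atTop_atTop
    have := hreal.comp hnat
    apply this.congr
    intro n
    simp only [Function.comp_apply, hR]
    push_cast
    ring
  -- conclude
  have hlimle : Real.log (Real.Gamma (a + 1)) + Real.log (Real.Gamma (b + 1))
      - 2 * Real.log (Real.Gamma (m + 1)) ≤ (E a + E b - 2 * E m) - d0 := by
    have hrhs : Filter.Tendsto (fun n : ℕ => (E a + E b - 2 * E m) - d0 - R (n + 1))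
        Filter.atTop (nhds ((E a + E b - 2 * E m) - d0)) := by
      simpa using hRlim.const_sub (E a + E b - 2 * E m - d0)
    exact le_of_tendsto_of_tendsto' hQlim hrhs key
  simp only [Glog, hE] at *
  linarith

lemma binPseudoLik_pos {T x : ℝ} (hT : 0 < T) (hx : x ∈ Set.Ioo (0:ℝ) T) :
    0 < binPseudoLik T x := by
  obtain ⟨hx0, hxT⟩ := hx
  have hTx : 0 < T - x := by linarith
  have g1 : 0 < Real.Gamma (T + 1) := Real.Gamma_pos_of_pos (by linarith)
  have g2 : 0 < Real.Gamma (x + 1) := Real.Gamma_pos_of_pos (by linarith)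
  have g3 : 0 < Real.Gamma (T - x + 1) := Real.Gamma_pos_of_pos (by linarith)
  have p1 : (0:ℝ) < (x / T) ^ x := Real.rpow_pos_of_pos (div_pos hx0 hT) _
  have p2 : (0:ℝ) < ((T - x) / T) ^ (T - x) := Real.rpow_pos_of_pos (div_pos hTx hT) _
  exact mul_pos (mul_pos (div_pos g1 (mul_pos g2 g3)) p1) p2

lemma log_binPseudoLik {T x : ℝ} (hT : 0 < T) (hx : x ∈ Set.Ioo (0:ℝ) T) :
    Real.log (binPseudoLik T x)
      = Real.log (Real.Gamma (T + 1)) - T * Real.log T + Glog x + Glog (T - x) := by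
  obtain ⟨hx0, hxT⟩ := hx
  have hTx : 0 < T - x := by linarith
  have g1 : 0 < Real.Gamma (T + 1) := Real.Gamma_pos_of_pos (by linarith)
  have g2 : 0 < Real.Gamma (x + 1) := Real.Gamma_pos_of_pos (by linarith)
  have g3 : 0 < Real.Gamma (T - x + 1) := Real.Gamma_pos_of_pos (by linarith)
  have p1 : (0:ℝ) < (x / T) ^ x := Real.rpow_pos_of_pos (div_pos hx0 hT) _
  have p2 : (0:ℝ) < ((T - x) / T) ^ (T - x) := Real.rpow_pos_of_pos (div_pos hTx hT) _
  rw [binPseudoLik, Real.log_mul (by positivity) p2.ne',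
    Real.log_mul (by positivity) p1.ne',
    Real.log_div g1.ne' (mul_pos g2 g3).ne', Real.log_mul g2.ne' g3.ne',
    Real.log_rpow (div_pos hx0 hT), Real.log_rpow (div_pos hTx hT),
    Real.log_div hx0.ne' hT.ne', Real.log_div hTx.ne' hT.ne']
  simp only [Glog]
  ring


/-- For every `x ∈ (0, T)` with `x ≠ T/2`, one has `f(T/2) < f(x)`: the
Gamma-extended binomial-based pseudo-likelihood attains a sole (strict global)
minimum on `(0, T)` at `x = T/2`. -/
theorem binPseudoLik_strict_global_min (T : ℝ) (hT : 0 < T) :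
    ∀ x ∈ Set.Ioo (0 : ℝ) T, x ≠ T / 2 →
      binPseudoLik T (T / 2) < binPseudoLik T x := by
  intro x hx hne
  obtain ⟨hx0, hxT⟩ := hx
  have hTx : 0 < T - x := by linarith
  have hmmem : T / 2 ∈ Set.Ioo (0:ℝ) T := ⟨by linarith, by linarith⟩
  -- set up a = min, b = max
  set a : ℝ := min x (T - x) with hadef
  set b : ℝ := max x (T - x) with hbdef
  have ha : 0 < a := lt_min hx0 hTx
  have hxne : x ≠ T - x := fun h => hne (by linarith)
  have haltb : a < b := min_lt_max.2 hxne
  have hab : a + b = T := by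
    rw [hadef, hbdef]
    rcases le_total x (T - x) with h | h
    · rw [min_eq_left h, max_eq_right h]; ring
    · rw [min_eq_right h, max_eq_left h]; ring
  have hG : Glog a + Glog b = Glog x + Glog (T - x) := by
    rw [hadef, hbdef]
    rcases le_total x (T - x) with h | h
    · rw [min_eq_left h, max_eq_right h]
    · rw [min_eq_right h, max_eq_left h, add_comm]
  have hmid := Glog_strict_mid ha haltb
  rw [hab] at hmid
  -- compare logs
  have hlog1 := log_binPseudoLik hT hmmem
  have hlog2 := log_binPseudoLik hT ⟨hx0, hxT⟩
  have hhalf : T - T / 2 = T / 2 := by ring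
  rw [hhalf] at hlog1
  have hloglt : Real.log (binPseudoLik T (T / 2)) < Real.log (binPseudoLik T x) := by
    rw [hlog1, hlog2]
    linarith [hmid, hG]
  have hp1 := binPseudoLik_pos hT hmmem
  have hp2 := binPseudoLik_pos hT ⟨hx0, hxT⟩
  have := Real.exp_lt_exp.mpr hloglt
  rwa [Real.exp_log hp1, Real.exp_log hp2] at this
end

section
/- For every natural number S, all real numbers a > 0, b > 0 and every r ≥ 0, ∫₀^∞ (2πt)^{−S/2} · exp(−r/(2t)) · (b^a/Γ(a)) · t^{−(a+1)} · exp(−b/t) dt = (Γ(a + S/2)/Γ(a)) · (2π)^{−S/2} · b^a · (b + r/2)^{−(a + S/2)}. -/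
/-! Completing the exponent, the Gaussian factor `(2πt)^{-S/2} e^{-r/(2t)}` turns the
inverse-gamma density with parameters `(a, b)` into an unnormalised one with parameters
`(a + S/2, b + r/2)`, whose integral `c^{-s} Γ(s)` follows from Euler's integral for `Γ`
by the substitution `t ↦ 1/t`. -/

open Real MeasureTheory Set

theorem integral_comp_inv_Ioi {E : Type*} [NormedAddCommGroup E] [NormedSpace ℝ E]
    (g : ℝ → E) : ∫ x in Ioi (0 : ℝ), (x ^ 2)⁻¹ • g x⁻¹ = ∫ x in Ioi (0 : ℝ), g x := by
  rw [← integral_comp_rpow_Ioi g (p := -1) (by norm_num)]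
  refine setIntegral_congr_fun measurableSet_Ioi fun x hx => ?_
  have hx : 0 < x := hx
  rw [rpow_neg_one, abs_neg, abs_one, one_mul, show (-1 : ℝ) - 1 = -(2 : ℕ) by norm_num,
    rpow_neg hx.le, rpow_natCast]

theorem integral_rpow_neg_mul_exp_neg_div_Ioi {s c : ℝ} (hs : 0 < s) (hc : 0 < c) :
    ∫ t in Ioi (0 : ℝ), t ^ (-(s + 1)) * exp (-c / t) = c ^ (-s) * Gamma s := by
  have hkernel : ∀ t ∈ Ioi (0 : ℝ), t ^ (-(s + 1)) * exp (-c / t) =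
      (t ^ 2)⁻¹ • ((t⁻¹) ^ (s - 1) * exp (-(c * t⁻¹))) := by
    intro t ht
    have ht : 0 < t := ht
    rw [smul_eq_mul, inv_rpow ht.le, ← rpow_neg ht.le, ← rpow_natCast, ← rpow_neg ht.le,
      ← mul_assoc, ← rpow_add ht, neg_div, div_eq_mul_inv]
    congr 2
    push_cast
    ring
  rw [setIntegral_congr_fun measurableSet_Ioi hkernel, integral_comp_inv_Ioi
    (fun u => u ^ (s - 1) * exp (-(c * u))), integral_rpow_mul_exp_neg_mul_Ioi hs hc,
    one_div, inv_rpow hc.le, ← rpow_neg hc.le]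

theorem gaussian_mul_inverseGamma_density_eq {d a b r t : ℝ} (ht : 0 < t) :
    (2 * π * t) ^ (-d / 2) * exp (-r / (2 * t)) * (b ^ a / Gamma a) * t ^ (-(a + 1)) *
        exp (-b / t) =
      (2 * π) ^ (-d / 2) * (b ^ a / Gamma a) *
        (t ^ (-((a + d / 2) + 1)) * exp (-(b + r / 2) / t)) := by
  have hpow : (2 * π * t) ^ (-d / 2) * t ^ (-(a + 1)) =
      (2 * π) ^ (-d / 2) * t ^ (-((a + d / 2) + 1)) := by
    rw [mul_rpow (by positivity) ht.le, mul_assoc, ← rpow_add ht]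
    ring_nf
  have hexp : exp (-r / (2 * t)) * exp (-b / t) = exp (-(b + r / 2) / t) := by
    rw [← exp_add]
    congr 1
    field_simp
    ring
  calc _ = (2 * π * t) ^ (-d / 2) * t ^ (-(a + 1)) * (b ^ a / Gamma a) *
        (exp (-r / (2 * t)) * exp (-b / t)) := by ring
    _ = _ := by rw [hpow, hexp]; ring

open Real MeasureTheory in
/-- For every natural number `S`, reals `a > 0`, `b > 0` and `r ≥ 0`,
`∫₀^∞ (2πt)^{−S/2} · exp(−r/(2t)) · (b^a/Γ(a)) · t^{−(a+1)} · exp(−b/t) dt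
  = (Γ(a + S/2)/Γ(a)) · (2π)^{−S/2} · b^a · (b + r/2)^{−(a + S/2)}`,
the marginal-prior computation in the two-block hierarchical model. -/
theorem marginal_prior_integral (S : ℕ) (a b r : ℝ)
    (ha : 0 < a) (hb : 0 < b) (hr : 0 ≤ r) :
    ∫ t in Set.Ioi (0 : ℝ),
        (2 * π * t) ^ (-(S : ℝ) / 2) * Real.exp (-r / (2 * t)) *
          (b ^ a / Real.Gamma a) * t ^ (-(a + 1)) * Real.exp (-b / t) =
      (Real.Gamma (a + S / 2) / Real.Gamma a) * (2 * π) ^ (-(S : ℝ) / 2) *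
        b ^ a * (b + r / 2) ^ (-(a + S / 2)) := by
  rw [setIntegral_congr_fun measurableSet_Ioi fun t ht =>
      gaussian_mul_inverseGamma_density_eq (d := S) (r := r) ht,
    integral_const_mul, integral_rpow_neg_mul_exp_neg_div_Ioi (by positivity) (by positivity)]
  ring
end
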